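/- arXiv:math/9204203 — 12 statements merged into one kernel-verified Lean document; each statement's English description precedes it below -/
import Mathlib

section
/- In any algebra (P, ·, ∘) satisfying the laws a∘(b∘c) = (a∘b)∘c, (a∘b)·c = a·(b·c), a·(b∘c) = (a·b)∘(a·c), and a∘b = (a·b)∘a, the left distributive law a·(b·c) = (a·b)·(a·c) holds for all a, b, c. -/
theorem sigma_implies_left_distributive_general {P : Type*} (mul comp : P → P → P)
    (hmix : ∀ a b c, mul (comp a b) c = mul a (mul b c))
    (habs : ∀ a b, comp a b = comp (mul a b) a) :
    ∀ a b c, mul a (mul b c) = mul (mul a b) (mul a c) := by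
  intro a b c
  calc mul a (mul b c)
      = mul (comp a b) c := (hmix a b c).symm
    _ = mul (comp (mul a b) a) c := by rw [habs]
    _ = mul (mul a b) (mul a c) := hmix (mul a b) a c

/-- In any algebra (P, ·, ∘) satisfying the laws Σ, the left distributive law holds. -/
theorem sigma_implies_left_distributive {P : Type*} (mul comp : P → P → P)
    (hassoc : ∀ a b c, comp a (comp b c) = comp (comp a b) c)
    (hmix : ∀ a b c, mul (comp a b) c = mul a (mul b c))
    (hdist : ∀ a b c, mul a (comp b c) = comp (mul a b) (mul a c))
    (habs : ∀ a b, comp a b = comp (mul a b) a) :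
    ∀ a b c, mul a (mul b c) = mul (mul a b) (mul a c) :=
  sigma_implies_left_distributive_general mul comp hmix habs
end

section
/- In a left distributive algebra, define p^(0) = p and p^(n+1) = p·p^(n). Then for all n and all i ≤ n, p^(n+1) = p^(i)·p^(n). -/
/-- Iterated dot powers: p^(0) = p, p^(n+1) = p · p^(n). -/
def dotPow {A : Type*} (mul : A → A → A) (p : A) : ℕ → A
  | 0 => p
  | n + 1 => mul p (dotPow mul p n)

/-- In a left distributive algebra, p^(n+1) = p^(i) · p^(n) for all i ≤ n. -/
theorem dotPow_succ_eq {A : Type*} (mul : A → A → A)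
    (hld : ∀ a b c, mul a (mul b c) = mul (mul a b) (mul a c))
    (p : A) : ∀ n : ℕ, ∀ i ≤ n, dotPow mul p (n + 1) = mul (dotPow mul p i) (dotPow mul p n) := by
  intro n
  induction n with
  | zero =>
    intro i hi
    rw [Nat.le_zero.mp hi]
    rfl
  | succ m ih =>
    rintro (_ | j) hj
    · rfl
    · calc dotPow mul p (m + 2)
          = mul p (mul (dotPow mul p j) (dotPow mul p m)) := by
            rw [dotPow, ih j (Nat.le_of_succ_le_succ hj)]
        _ = mul (dotPow mul p (j + 1)) (dotPow mul p (m + 1)) := hld _ _ _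
end

section
/- In any algebra (P, ·, ∘) satisfying the laws Σ, define r <_L s iff s = r·a₀·...·a_{n-1}·a_n or s = r·a₀·...·a_{n-1} ∘ a_n for some n ≥ 0 (left association, with the last operation possibly ∘). Then for all p, r, s ∈ P: if r <_L s then p·r <_L p∘r and p∘r <_L p·s. -/
/-- r <_L s in an algebra with · and ∘ : s is a left-associated product
r·a₀·...·a_{n-1} ∗ a_n where ∗ ∈ {·, ∘} and all other operations are ·. -/
def ltLP {P : Type*} (mul comp : P → P → P) (r s : P) : Prop :=
  ∃ (l : List P) (a : P),
    s = mul (List.foldl mul r l) a ∨ s = comp (List.foldl mul r l) a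

/-!
The laws make left multiplication by `p` self-distributive:
`p·(x·y) = (p∘x)·y = ((p·x)∘p)·y = (p·x)·(p·y)`. Hence `p·(r·a₀·a₁·…·aₙ) = (p∘r)·a₀·(p·a₁)·…·(p·aₙ)`,
which shows `p∘r <_L p·s` when `s` ends in `·`; when `s = t∘a`, rewrite it as `(t·a)∘t` and
distribute `p` over `∘`. Finally `p∘r = (p·r)∘p` gives `p·r <_L p∘r`.
-/

section

variable {P : Type*} {mul comp : P → P → P}

theorem mul_mul_self_distrib (hmix : ∀ a b c, mul (comp a b) c = mul a (mul b c))
    (habs : ∀ a b, comp a b = comp (mul a b) a) (p x y : P) :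
    mul p (mul x y) = mul (mul p x) (mul p y) := by
  rw [← hmix, habs, hmix]

theorem mul_foldl_mul (hsd : ∀ p x y : P, mul p (mul x y) = mul (mul p x) (mul p y))
    (p x : P) (l : List P) :
    mul p (l.foldl mul x) = (l.map (mul p)).foldl mul (mul p x) := by
  induction l generalizing x with
  | nil => rfl
  | cons a l ih => rw [List.map_cons, List.foldl_cons, List.foldl_cons, ih, hsd]

theorem mul_foldl_mul_cons (hmix : ∀ a b c, mul (comp a b) c = mul a (mul b c))
    (hsd : ∀ p x y : P, mul p (mul x y) = mul (mul p x) (mul p y)) (p r a : P) (l : List P) :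
    mul p ((a :: l).foldl mul r) = (a :: l.map (mul p)).foldl mul (comp p r) := by
  rw [List.foldl_cons, mul_foldl_mul hsd, ← hmix, List.foldl_cons]

theorem exists_mul_foldl_mul_mul_eq (hmix : ∀ a b c, mul (comp a b) c = mul a (mul b c))
    (habs : ∀ a b, comp a b = comp (mul a b) a) (p r a : P) (l : List P) :
    ∃ (M : List P) (c : P), mul p (mul (l.foldl mul r) a) = mul (M.foldl mul (comp p r)) c := by
  have hsd := mul_mul_self_distrib hmix habs
  cases l with
  | nil => exact ⟨[], a, (hmix p r a).symm⟩
  | cons b t => exact ⟨b :: t.map (mul p), mul p a, by rw [hsd, mul_foldl_mul_cons hmix hsd]⟩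

end

theorem ltLP_mul_comp_general {P : Type*} (mul comp : P → P → P)
    (hmix : ∀ a b c, mul (comp a b) c = mul a (mul b c))
    (hdist : ∀ a b c, mul a (comp b c) = comp (mul a b) (mul a c))
    (habs : ∀ a b, comp a b = comp (mul a b) a) :
    ∀ p r s : P, ltLP mul comp r s →
      ltLP mul comp (mul p r) (comp p r) ∧ ltLP mul comp (comp p r) (mul p s) := by
  rintro p r s ⟨l, a, hs⟩
  refine ⟨⟨[], p, Or.inr (habs p r)⟩, ?_⟩
  obtain ⟨M, c, hM⟩ := exists_mul_foldl_mul_mul_eq hmix habs p r a l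
  rcases hs with rfl | rfl
  · exact ⟨M, c, Or.inl hM⟩
  · refine ⟨M ++ [c], mul p (l.foldl mul r), Or.inr ?_⟩
    rw [habs _ a, hdist, hM, List.foldl_append, List.foldl_cons, List.foldl_nil]

/-- Theorem 1(i): in any algebra satisfying Σ, r <_L s implies p·r <_L p∘r and p∘r <_L p·s. -/
theorem ltLP_mul_comp {P : Type*} (mul comp : P → P → P)
    (hassoc : ∀ a b c, comp a (comp b c) = comp (comp a b) c)
    (hmix : ∀ a b c, mul (comp a b) c = mul a (mul b c))
    (hdist : ∀ a b c, mul a (comp b c) = comp (mul a b) (mul a c))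
    (habs : ∀ a b, comp a b = comp (mul a b) a) :
    ∀ p r s : P, ltLP mul comp r s →
      ltLP mul comp (mul p r) (comp p r) ∧ ltLP mul comp (comp p r) (mul p s) :=
  ltLP_mul_comp_general mul comp hmix hdist habs
end

section
/- In the free left distributive algebra on one generator x, the relation <_L is not well-founded: there is an infinite strictly descending sequence under <_L. -/
/-- Terms in one generator x with a binary operation ·. -/
inductive LDTerm : Type
  | x : LDTerm
  | mul : LDTerm → LDTerm → LDTerm

/-- The congruence generated by the left distributive law. -/
inductive LDEq : LDTerm → LDTerm → Prop
  | ld (a b c : LDTerm) :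
      LDEq (LDTerm.mul a (LDTerm.mul b c)) (LDTerm.mul (LDTerm.mul a b) (LDTerm.mul a c))
  | refl (a : LDTerm) : LDEq a a
  | symm {a b : LDTerm} : LDEq a b → LDEq b a
  | trans {a b c : LDTerm} : LDEq a b → LDEq b c → LDEq a c
  | congr {a b c d : LDTerm} : LDEq a b → LDEq c d → LDEq (LDTerm.mul a c) (LDTerm.mul b d)

instance LDTerm.setoid : Setoid LDTerm :=
  ⟨LDEq, LDEq.refl, LDEq.symm, LDEq.trans⟩

/-- The free left distributive algebra on one generator. -/
def FreeLD : Type := Quotient LDTerm.setoid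

/-- The generator x of the free left distributive algebra. -/
def FreeLD.x : FreeLD := ⟦LDTerm.x⟧

/-- Multiplication on the free left distributive algebra. -/
def FreeLD.mul : FreeLD → FreeLD → FreeLD :=
  Quotient.map₂ LDTerm.mul fun _ _ h _ _ h' => LDEq.congr h h'

/-- a <_L b : b = a·c₀·c₁·...·c_n (left association) for some n ≥ 0. -/
def FreeLD.ltL (a b : FreeLD) : Prop :=
  ∃ (c : FreeLD) (l : List FreeLD), b = List.foldl FreeLD.mul (FreeLD.mul a c) l

/-!
Write `xₙ` for the left powers of `x` (`x₀ = x`, `xₙ₊₁ = xₙ x`). Left distributivity gives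
`xₙ xₖ₊₁ = (xₙ xₖ)(xₙ x) = (xₙ xₖ) xₙ₊₁`, so `xₙ xₖ <_L xₙ xₖ₊₁`, and for `k = 0` it gives
`xₙ x₁ = xₙ₊₁ xₙ₊₁`. Hence below every `xₙ₊₁ xₖ₊₁` there is another element of this shape:
lower `k` while `k > 0`, and at `k = 0` pass to `xₙ₊₂ xₙ₊₂ >_L xₙ₊₂ xₙ₊₁`.
This works in every left self-distributive structure (a `Shelf`).
-/

open Quandles

namespace Shelf

variable {α : Type*} [Shelf α]

def leftPow (g : α) : ℕ → α
  | 0 => g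
  | n + 1 => leftPow g n ◃ g

theorem leftPow_act_leftPow_succ (g : α) (n k : ℕ) :
    leftPow g n ◃ leftPow g (k + 1) = (leftPow g n ◃ leftPow g k) ◃ leftPow g (n + 1) :=
  self_distrib

theorem leftPow_act_leftPow_one (g : α) (n : ℕ) :
    leftPow g n ◃ leftPow g 1 = leftPow g (n + 1) ◃ leftPow g (n + 1) :=
  leftPow_act_leftPow_succ g n 0

theorem exists_leftPow_act_leftPow_eq_act (g : α) (p : ℕ × ℕ) :
    ∃ (q : ℕ × ℕ) (c : α), leftPow g (p.1 + 1) ◃ leftPow g (p.2 + 1) =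
      (leftPow g (q.1 + 1) ◃ leftPow g (q.2 + 1)) ◃ c := by
  obtain ⟨n, _ | k⟩ := p
  · exact ⟨(n + 1, n), leftPow g (n + 3), by
      rw [leftPow_act_leftPow_one, leftPow_act_leftPow_succ]⟩
  · exact ⟨(n, k), leftPow g (n + 2), leftPow_act_leftPow_succ g (n + 1) (k + 1)⟩

theorem exists_seq_eq_act_succ (g : α) : ∃ f : ℕ → α, ∀ n, ∃ c, f n = f (n + 1) ◃ c := by
  choose next c hc using exists_leftPow_act_leftPow_eq_act g
  let u (p : ℕ × ℕ) : α := leftPow g (p.1 + 1) ◃ leftPow g (p.2 + 1)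
  refine ⟨fun n => u (next^[n] (0, 0)), fun n => ⟨c (next^[n] (0, 0)), ?_⟩⟩
  dsimp only
  rw [Function.iterate_succ_apply']
  exact hc _

end Shelf

namespace FreeLD

theorem mul_self_distrib (a b c : FreeLD) : a.mul (b.mul c) = (a.mul b).mul (a.mul c) :=
  Quotient.inductionOn₃ a b c fun a b c => Quotient.sound (LDEq.ld a b c)

instance : Shelf FreeLD := ⟨FreeLD.mul, mul_self_distrib _ _ _⟩

theorem ltL_mul (a c : FreeLD) : ltL a (a.mul c) := ⟨c, [], rfl⟩

end FreeLD

/-- <_L is not well-founded on the free left distributive algebra: there is an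
infinite strictly <_L-descending sequence. -/
theorem FreeLD.ltL_not_wellFounded :
    ∃ f : ℕ → FreeLD, ∀ n, FreeLD.ltL (f (n + 1)) (f n) := by
  obtain ⟨f, hf⟩ := Shelf.exists_seq_eq_act_succ FreeLD.x
  refine ⟨f, fun n => ?_⟩
  obtain ⟨c, hc⟩ := hf n
  exact hc ▸ FreeLD.ltL_mul (f (n + 1)) c
end

section
/- Left division is cancellative in the free left distributive algebra: for p, q, r in the free left distributive algebra A, p·q = p·r if and only if q = r. -/
theorem FreeLD.mul_left_cancel_iff_general
    (hirr : ∀ a : FreeLD, ¬ FreeLD.ltL a a)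
    (htri : ∀ a b : FreeLD, FreeLD.ltL a b ∨ a = b ∨ FreeLD.ltL b a)
    (hmono : ∀ p a b : FreeLD, FreeLD.ltL a b → FreeLD.ltL (FreeLD.mul p a) (FreeLD.mul p b)) :
    ∀ p q r : FreeLD, FreeLD.mul p q = FreeLD.mul p r ↔ q = r := by
  have : Std.Irrefl FreeLD.ltL := ⟨hirr⟩
  have : Std.Trichotomous FreeLD.ltL :=
    ⟨fun a b hab hba => ((htri a b).resolve_left hab).resolve_right hba⟩
  intro p q r
  exact (injective_of_increasing FreeLD.ltL FreeLD.ltL (FreeLD.mul p) (hmono p _ _)).eq_iff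

/-- Theorem 1(vi), first part: left multiplication is cancellative in the free left
distributive algebra (assuming the Laver–Dehornoy theorem that <_L is an
irreflexive linear order, and monotonicity of left multiplication). -/
theorem FreeLD.mul_left_cancel_iff
    (hirr : ∀ a : FreeLD, ¬ FreeLD.ltL a a)
    (htrans : ∀ a b c : FreeLD, FreeLD.ltL a b → FreeLD.ltL b c → FreeLD.ltL a c)
    (htri : ∀ a b : FreeLD, FreeLD.ltL a b ∨ a = b ∨ FreeLD.ltL b a)
    (hmono : ∀ p a b : FreeLD, FreeLD.ltL a b → FreeLD.ltL (FreeLD.mul p a) (FreeLD.mul p b)) :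
    ∀ p q r : FreeLD, FreeLD.mul p q = FreeLD.mul p r ↔ q = r :=
  FreeLD.mul_left_cancel_iff_general hirr htri hmono
end

section
/- Define iterates of a pair (a,b) in a left distributive algebra by I₁(a,b) = a, I₂(a,b) = a·b, I_{n+2}(a,b) = I_{n+1}(a,b)·I_n(a,b). Then in an algebra satisfying the laws Σ, for every n ≥ 1, I_n(a,b) <_L a∘b, where r <_L s iff s is a left-associated product starting at r with final operation · or ∘. -/
/-!
Iterating the law `x ∘ y = (x · y) ∘ x` starting from `a ∘ b = I₂ ∘ I₁` gives
`a ∘ b = I_{m+2} ∘ I_{m+1}` for every `m`, so every iterate is the left factor of a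
`∘`-product equal to `a ∘ b`.
-/

/-- Iterates of a pair: I₁(a,b)=a, I₂(a,b)=a·b, I_{n+2}=I_{n+1}·I_n (I₀ is a dummy). -/
def iter {P : Type*} (mul : P → P → P) : ℕ → P → P → P
  | 0, a, _ => a
  | 1, a, _ => a
  | 2, a, b => mul a b
  | n + 3, a, b => mul (iter mul (n + 2) a b) (iter mul (n + 1) a b)

theorem ltLP_comp_self {P : Type*} (mul comp : P → P → P) (r s : P) :
    ltLP mul comp r (comp r s) :=
  ⟨[], s, Or.inr rfl⟩

theorem comp_eq_comp_iter {P : Type*} (mul comp : P → P → P)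
    (habs : ∀ a b, comp a b = comp (mul a b) a) (a b : P) (m : ℕ) :
    comp a b = comp (iter mul (m + 2) a b) (iter mul (m + 1) a b) := by
  induction m with
  | zero => exact habs a b
  | succ k ih => exact ih.trans (habs _ _)

theorem iter_ltLP_comp_general {P : Type*} (mul comp : P → P → P)
    (habs : ∀ a b, comp a b = comp (mul a b) a) :
    ∀ (a b : P) (n : ℕ), 1 ≤ n → ltLP mul comp (iter mul n a b) (comp a b) := by
  intro a b n hn
  match n, hn with
  | 1, _ => exact ltLP_comp_self mul comp a b
  | m + 2, _ =>
    rw [comp_eq_comp_iter mul comp habs a b m]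
    exact ltLP_comp_self mul comp _ _

/-- In an algebra satisfying Σ, every iterate I_n(a,b) (n ≥ 1) satisfies I_n(a,b) <_L a∘b. -/
theorem iter_ltLP_comp {P : Type*} (mul comp : P → P → P)
    (hassoc : ∀ a b c, comp a (comp b c) = comp (comp a b) c)
    (hmix : ∀ a b c, mul (comp a b) c = mul a (mul b c))
    (hdist : ∀ a b c, mul a (comp b c) = comp (mul a b) (mul a c))
    (habs : ∀ a b, comp a b = comp (mul a b) a) :
    ∀ (a b : P) (n : ℕ), 1 ≤ n → ltLP mul comp (iter mul n a b) (comp a b) :=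
  iter_ltLP_comp_general mul comp habs
end

section
/- Lemma 4(i): Let P satisfy Σ, let <_L be the left-subterm ordering, assumed to be a linear order compatible as in Theorem 1(i) and (vi). If w, a, b₀, ..., b_n ∈ P, the term w·b₀·b₁·...·b_{n-1} ∗ b_n is prenormal with respect to <_L (i.e., b₂ ≤_L w, b₃ ≤_L w·b₀, ..., b_n ≤_L w·b₀·...·b_{n-2}, and if ∗ = ∘ and n ≥ 2 also b_n <_L w·b₀·...·b_{n-1}), and b₀ <_L a, then w·b₀·b₁·...·b_{n-1} ∗ b_n <_L w·a. -/
/-- a ≤_L b. -/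
def leLP {P : Type*} (mul comp : P → P → P) (r s : P) : Prop :=
  ltLP mul comp r s ∨ r = s

section LeftSubtermOrder

variable {P : Type*} (mul comp : P → P → P)

theorem ltLP_mul_right (r x : P) : ltLP mul comp r (mul r x) :=
  ⟨[], x, Or.inl rfl⟩

variable {mul comp}

theorem ltLP_mul_comp_s13
    (hthm1i : ∀ p r s : P, ltLP mul comp r s →
      ltLP mul comp (mul p r) (comp p r) ∧ ltLP mul comp (comp p r) (mul p s))
    (p r : P) : ltLP mul comp (mul p r) (comp p r) :=
  (hthm1i p r (mul r r) (ltLP_mul_right mul comp r r)).1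

theorem ltLP_comp_mul_of_leLP
    (habs : ∀ a b, comp a b = comp (mul a b) a)
    (htrans : ∀ a b c : P, ltLP mul comp a b → ltLP mul comp b c → ltLP mul comp a c)
    (hthm1i : ∀ p r s : P, ltLP mul comp r s →
      ltLP mul comp (mul p r) (comp p r) ∧ ltLP mul comp (comp p r) (mul p s))
    {p d c t : P} (hc : leLP mul comp c p) (ht : ltLP mul comp (comp p d) t) :
    ltLP mul comp (comp (mul p d) c) t := by
  rw [habs p d] at ht
  rcases hc with hlt | rfl
  · have h₁ : ltLP mul comp (comp (mul p d) c) (mul (mul p d) p) :=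
      (hthm1i (mul p d) c p hlt).2
    exact htrans _ _ _ h₁ (htrans _ _ _ (ltLP_mul_comp_s13 hthm1i _ _) ht)
  · exact ht

theorem ltLP_comp_of_prenormal
    (habs : ∀ a b, comp a b = comp (mul a b) a)
    (htrans : ∀ a b c : P, ltLP mul comp a b → ltLP mul comp b c → ltLP mul comp a c)
    (hthm1i : ∀ p r s : P, ltLP mul comp r s →
      ltLP mul comp (mul p r) (comp p r) ∧ ltLP mul comp (comp p r) (mul p s))
    {t : P} {n : ℕ} {b pre : ℕ → P} (hpre : ∀ k, pre (k + 1) = mul (pre k) (b k))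
    (hprenorm : ∀ k < n, leLP mul comp (b (k + 1)) (pre k))
    (h₀ : ltLP mul comp (comp (pre 0) (b 0)) t) :
    ∀ k ≤ n, ltLP mul comp (comp (pre k) (b k)) t := by
  intro k hk
  induction k with
  | zero => exact h₀
  | succ k ih =>
    rw [hpre]
    exact ltLP_comp_mul_of_leLP habs htrans hthm1i (hprenorm k hk) (ih (Nat.le_of_succ_le hk))

end LeftSubtermOrder

theorem prenormal_ltLP_mul_general {P : Type*} (mul comp : P → P → P)
    (habs : ∀ a b, comp a b = comp (mul a b) a)
    (htrans : ∀ a b c : P, ltLP mul comp a b → ltLP mul comp b c → ltLP mul comp a c)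
    (hthm1i : ∀ p r s : P, ltLP mul comp r s →
      ltLP mul comp (mul p r) (comp p r) ∧ ltLP mul comp (comp p r) (mul p s))
    (w a : P) (n : ℕ) (b : ℕ → P) (star : Bool)
    (pre : ℕ → P) (hpre : ∀ k, pre k = List.foldl mul w ((List.range k).map b))
    (hprenorm : ∀ k, 1 ≤ k → k ≤ n → leLP mul comp (b k) (pre (k - 1)))
    (hb0 : ltLP mul comp (b 0) a) :
    ltLP mul comp (if star then comp (pre n) (b n) else mul (pre n) (b n)) (mul w a) := by
  have hpre_succ : ∀ k, pre (k + 1) = mul (pre k) (b k) := fun k => by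
    simp [hpre, List.range_succ]
  have h₀ : ltLP mul comp (comp (pre 0) (b 0)) (mul w a) := by
    simpa [hpre] using (hthm1i w (b 0) a hb0).2
  have hcomp : ltLP mul comp (comp (pre n) (b n)) (mul w a) :=
    ltLP_comp_of_prenormal habs htrans hthm1i hpre_succ
      (fun k hk => hprenorm (k + 1) k.succ_pos hk) h₀ n le_rfl
  cases star with
  | true => exact hcomp
  | false => exact htrans _ _ _ (ltLP_mul_comp_s13 hthm1i _ _) hcomp

/-- Lemma 4(i): if the term w·b₀·b₁·...·b_{n-1} ∗ b_n is prenormal with respect to <_L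
(each b_k with 1 ≤ k ≤ n satisfies b_k ≤_L w·b₀·...·b_{k-2}, and if ∗ = ∘ and n ≥ 2
also b_n <_L w·b₀·...·b_{n-1}) and b₀ <_L a, then w·b₀·...·b_{n-1} ∗ b_n <_L w·a.
Here `star = true` encodes ∗ = ∘ and `star = false` encodes ∗ = ·;
`pre k` denotes the left-associated product w·b₀·...·b_{k-1}. -/
theorem prenormal_ltLP_mul {P : Type*} (mul comp : P → P → P)
    (hassoc : ∀ a b c, comp a (comp b c) = comp (comp a b) c)
    (hmix : ∀ a b c, mul (comp a b) c = mul a (mul b c))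
    (hdist : ∀ a b c, mul a (comp b c) = comp (mul a b) (mul a c))
    (habs : ∀ a b, comp a b = comp (mul a b) a)
    (hirr : ∀ a : P, ¬ ltLP mul comp a a)
    (htrans : ∀ a b c : P, ltLP mul comp a b → ltLP mul comp b c → ltLP mul comp a c)
    (htri : ∀ a b : P, ltLP mul comp a b ∨ a = b ∨ ltLP mul comp b a)
    (hthm1i : ∀ p r s : P, ltLP mul comp r s →
      ltLP mul comp (mul p r) (comp p r) ∧ ltLP mul comp (comp p r) (mul p s))
    (hcancel : ∀ p q r : P, (ltLP mul comp (mul p q) (mul p r) ↔ ltLP mul comp q r))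
    (w a : P) (n : ℕ) (b : ℕ → P) (star : Bool)
    (pre : ℕ → P) (hpre : ∀ k, pre k = List.foldl mul w ((List.range k).map b))
    (hprenorm : ∀ k, 1 ≤ k → k ≤ n → leLP mul comp (b k) (pre (k - 1)))
    (hcirc : star = true → 2 ≤ n → ltLP mul comp (b n) (pre n))
    (hb0 : ltLP mul comp (b 0) a) :
    ltLP mul comp (if star then comp (pre n) (b n) else mul (pre n) (b n)) (mul w a) :=
  prenormal_ltLP_mul_general mul comp habs htrans hthm1i w a n b star pre hpre hprenorm hb0
end

section
/- Well-foundedness of the subterm-iterate relation (Lemma 3): Consider terms built from a set of generators using two binary operations · and ∘. The transitive closure of the relation relating u ≺ v when u is a proper subterm of v, or when v = a∘b and u = I_k(a,b) for some k ≥ 1 (where I₁(a,b)=a, I₂(a,b)=a·b, I_{n+2}(a,b)=I_{n+1}(a,b)·I_n(a,b) as terms), is a well-founded partial order on terms. -/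
/-- Terms over a set of generators with two binary operations · and ∘. -/
inductive Tm (α : Type*) : Type _
  | gen : α → Tm α
  | mul : Tm α → Tm α → Tm α
  | comp : Tm α → Tm α → Tm α

/-- (Reflexive) subterm relation. -/
inductive Tm.Subt {α : Type*} : Tm α → Tm α → Prop
  | refl (a : Tm α) : Tm.Subt a a
  | mulL {u a b : Tm α} : Tm.Subt u a → Tm.Subt u (Tm.mul a b)
  | mulR {u a b : Tm α} : Tm.Subt u b → Tm.Subt u (Tm.mul a b)
  | compL {u a b : Tm α} : Tm.Subt u a → Tm.Subt u (Tm.comp a b)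
  | compR {u a b : Tm α} : Tm.Subt u b → Tm.Subt u (Tm.comp a b)

/-- Proper subterm. -/
def Tm.PSubt {α : Type*} (u v : Tm α) : Prop := u ≠ v ∧ Tm.Subt u v

/-- Iterates of a pair of terms: I₁(a,b)=a, I₂(a,b)=a·b, I_{n+2}=I_{n+1}·I_n
(I₀ is a dummy value). -/
def Tm.iter {α : Type*} : ℕ → Tm α → Tm α → Tm α
  | 0, a, _ => a
  | 1, a, _ => a
  | 2, a, b => Tm.mul a b
  | n + 3, a, b => Tm.mul (Tm.iter (n + 2) a b) (Tm.iter (n + 1) a b)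

/-- The base relation of Lemma 3: u ≺₀ v iff u is a proper subterm of v, or
v = a∘b and u = I_k(a,b) for some k ≥ 1. -/
def Tm.prec0 {α : Type*} (u v : Tm α) : Prop :=
  Tm.PSubt u v ∨ ∃ (a b : Tm α) (k : ℕ), 1 ≤ k ∧ v = Tm.comp a b ∧ u = Tm.iter k a b

/-!
Rank a term first by its number of `∘`-nodes along the worst branch, where `·` takes the maximum
of its arguments instead of adding, and then by its size. The iterates of `(a, b)` are built from
`a` and `b` by `·` alone, so their rank is at most `max (rank a) (rank b) < rank (a ∘ b)`; a proper
subterm has no larger rank and strictly smaller size. Hence `≺₀` descends lexicographically and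
is well-founded, and so is its transitive closure.
-/

namespace Tm

variable {α : Type*}

def compRank : Tm α → ℕ
  | gen _ => 0
  | mul a b => max a.compRank b.compRank
  | comp a b => a.compRank + b.compRank + 1

def size : Tm α → ℕ
  | gen _ => 1
  | mul a b => a.size + b.size + 1
  | comp a b => a.size + b.size + 1

theorem Subt.compRank_le {u v : Tm α} (h : u.Subt v) : u.compRank ≤ v.compRank := by
  induction h with
  | refl => exact le_rfl
  | mulL _ ih | mulR _ ih | compL _ ih | compR _ ih => simp only [compRank]; omega

theorem Subt.size_le {u v : Tm α} (h : u.Subt v) : u.size ≤ v.size := by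
  induction h with
  | refl => exact le_rfl
  | mulL _ ih | mulR _ ih | compL _ ih | compR _ ih => simp only [size]; omega

theorem PSubt.size_lt {u v : Tm α} (h : u.PSubt v) : u.size < v.size := by
  obtain ⟨hne, hsub⟩ := h
  cases hsub with
  | refl => exact absurd rfl hne
  | mulL h | mulR h | compL h | compR h => have := h.size_le; simp only [size]; omega

theorem compRank_iter_le (a b : Tm α) :
    ∀ k, (iter k a b).compRank ≤ max a.compRank b.compRank
  | 0 | 1 => le_max_left _ _
  | 2 => le_rfl
  | n + 3 => by
    have := compRank_iter_le a b (n + 2)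
    have := compRank_iter_le a b (n + 1)
    simp only [iter, compRank]
    omega

theorem compRank_iter_lt_comp (a b : Tm α) (k : ℕ) :
    (iter k a b).compRank < (comp a b).compRank := by
  have := compRank_iter_le a b k
  simp only [compRank]
  omega

def rankLex (t : Tm α) : ℕ ×ₗ ℕ := toLex (t.compRank, t.size)

theorem prec0.rankLex_lt {u v : Tm α} (h : prec0 u v) : u.rankLex < v.rankLex := by
  rw [rankLex, rankLex, Prod.Lex.toLex_lt_toLex]
  rcases h with hsub | ⟨a, b, k, -, rfl, rfl⟩
  · exact (hsub.2.compRank_le).lt_or_eq.imp id fun h => ⟨h, hsub.size_lt⟩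
  · exact Or.inl (compRank_iter_lt_comp a b k)

theorem prec0_wellFounded : WellFounded (prec0 (α := α)) :=
  Subrelation.wf (fun h => h.rankLex_lt) (InvImage.wf rankLex wellFounded_lt)

end Tm

/-- Lemma 3: the transitive closure of ≺₀ is a well-founded (strict partial) order. -/
theorem Tm.transGen_prec0_wellFounded {α : Type*} :
    WellFounded (Relation.TransGen (Tm.prec0 (α := α))) :=
  Tm.prec0_wellFounded.transGen
end

section
/- Every iterate I_n(a,b) of a pair of terms (a,b) is, for n ≥ 3, of the form u·v where u and v are previous iterates; consequently every I_n(a,b) has a and b among its subterms, and for every infinite sequence u₀, u₁, ... where each u_{n+1} is either a proper subterm of u_n or an iterate of a pair (r,s) with u_n = r∘s, some u_n is a subterm of a proper subterm of u₀. -/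
namespace TmAux

variable {α : Type*}

/-- Size of a term. -/
def sz : Tm α → ℕ
  | .gen _ => 1
  | .mul a b => sz a + sz b + 1
  | .comp a b => sz a + sz b + 1

lemma sz_pos (a : Tm α) : 1 ≤ sz a := by
  cases a <;> simp [sz]

lemma subt_sz {u v : Tm α} (h : Tm.Subt u v) : sz u ≤ sz v := by
  induction h <;> simp [sz] at * <;> omega

lemma psubt_sz {u v : Tm α} (h : Tm.PSubt u v) : sz u < sz v := by
  obtain ⟨hne, hs⟩ := h
  cases hs with
  | refl => exact absurd rfl hne
  | mulL h => have := subt_sz h; simp [sz]; omega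
  | mulR h => have := subt_sz h; simp [sz]; omega
  | compL h => have := subt_sz h; simp [sz]; omega
  | compR h => have := subt_sz h; simp [sz]; omega

lemma ne_of_sz_lt {a b : Tm α} (h : sz a < sz b) : a ≠ b := by
  intro e; rw [e] at h; omega

/-- Classification of subterms of an iterate. -/
lemma iter_subt (r s : Tm α) : ∀ k w, Tm.Subt w (Tm.iter k r s) →
    Tm.Subt w r ∨ Tm.Subt w s ∨ ∃ j, 1 ≤ j ∧ j ≤ k ∧ w = Tm.iter j r s
  | 0, w, h => Or.inl h
  | 1, w, h => Or.inl h
  | 2, w, h => by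
      cases h with
      | refl => exact Or.inr (Or.inr ⟨2, by omega, by omega, rfl⟩)
      | mulL h => exact Or.inl h
      | mulR h => exact Or.inr (Or.inl h)
  | (k+3), w, h => by
      cases h with
      | refl => exact Or.inr (Or.inr ⟨k+3, by omega, le_refl _, rfl⟩)
      | mulL h =>
          rcases iter_subt r s (k+2) w h with h' | h' | ⟨j, hj1, hj2, hj3⟩
          · exact Or.inl h'
          · exact Or.inr (Or.inl h')
          · exact Or.inr (Or.inr ⟨j, hj1, by omega, hj3⟩)
      | mulR h =>
          rcases iter_subt r s (k+1) w h with h' | h' | ⟨j, hj1, hj2, hj3⟩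
          · exact Or.inl h'
          · exact Or.inr (Or.inl h')
          · exact Or.inr (Or.inr ⟨j, hj1, by omega, hj3⟩)

lemma iter_is_mul (r s : Tm α) : ∀ j, 2 ≤ j → ∃ x y, Tm.iter j r s = Tm.mul x y
  | 0, h => absurd h (by omega)
  | 1, h => absurd h (by omega)
  | 2, _ => ⟨r, s, rfl⟩
  | (k+3), _ => ⟨_, _, rfl⟩

/-- Part (2) helper: a (and for n ≥ 2 also b) is a subterm of every iterate. -/
lemma subt_iter (a b : Tm α) : ∀ n, Tm.Subt a (Tm.iter n a b) ∧
    (2 ≤ n → Tm.Subt b (Tm.iter n a b))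
  | 0 => ⟨Tm.Subt.refl a, fun h => absurd h (by omega)⟩
  | 1 => ⟨Tm.Subt.refl a, fun h => absurd h (by omega)⟩
  | 2 => ⟨Tm.Subt.mulL (Tm.Subt.refl a), fun _ => Tm.Subt.mulR (Tm.Subt.refl b)⟩
  | (n+3) => ⟨Tm.Subt.mulL (subt_iter a b (n+2)).1,
      fun _ => Tm.Subt.mulL ((subt_iter a b (n+2)).2 (by omega))⟩

/-- Main lemma for part (3), by strong induction on the size of u 0. -/
lemma key : ∀ N : ℕ, ∀ (u : ℕ → Tm α),
    (∀ n, Tm.PSubt (u (n + 1)) (u n) ∨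
      ∃ (r s : Tm α) (k : ℕ), 1 ≤ k ∧ u n = Tm.comp r s ∧ u (n + 1) = Tm.iter k r s) →
    sz (u 0) ≤ N →
    ∃ (n : ℕ) (w : Tm α), Tm.PSubt w (u 0) ∧ Tm.Subt (u n) w := by
  intro N
  induction N with
  | zero => intro u _ hle; have := sz_pos (u 0); omega
  | succ N ih =>
    intro u hstep hle
    rcases hstep 0 with h0 | ⟨r, s, k, hk, hv, h1⟩
    · exact ⟨1, u 1, h0, Tm.Subt.refl _⟩
    · have hszr : sz r < sz (u 0) := by rw [hv]; simp [sz]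
      have hszs : sz s < sz (u 0) := by rw [hv]; simp [sz]
      have hrv : Tm.PSubt r (u 0) := by
        refine ⟨ne_of_sz_lt hszr, ?_⟩
        rw [hv]; exact Tm.Subt.compL (Tm.Subt.refl r)
      have hsv : Tm.PSubt s (u 0) := by
        refine ⟨ne_of_sz_lt hszs, ?_⟩
        rw [hv]; exact Tm.Subt.compR (Tm.Subt.refl s)
      have sub : ∀ j, ∀ n, 1 ≤ j → u n = Tm.iter j r s →
          ∃ (m : ℕ) (w : Tm α), Tm.PSubt w (u 0) ∧ Tm.Subt (u m) w := by
        intro j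
        induction j using Nat.strong_induction_on with
        | _ j ihj =>
          intro n hj hn
          rcases hstep n with hp | ⟨a, c, m, hm, hcomp, hnext⟩
          · have hsub : Tm.Subt (u (n+1)) (Tm.iter j r s) := by rw [← hn]; exact hp.2
            rcases iter_subt r s j (u (n+1)) hsub with h' | h' | ⟨j', hj1, hj2, hj3⟩
            · exact ⟨n+1, r, hrv, h'⟩
            · exact ⟨n+1, s, hsv, h'⟩
            · have hne : j' ≠ j := by
                intro e; rw [e] at hj3; exact hp.1 (by rw [hj3, ← hn])
              exact ihj j' (by omega) (n+1) hj1 hj3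
          · -- u n = comp a c; since u n = iter j r s, must have j = 1, u n = r
            have hj1 : j = 1 := by
              by_contra h
              have h2 : 2 ≤ j := by omega
              obtain ⟨x, y, hxy⟩ := iter_is_mul r s j h2
              rw [hn, hxy] at hcomp
              cases hcomp
            have hunr : u n = r := by rw [hn, hj1]; rfl
            have hle' : sz ((fun i => u (n + i)) 0) ≤ N := by
              simpa [hunr] using by omega
            obtain ⟨m', w, hw, hsub⟩ := ih (fun i => u (n + i))
              (fun i => by simpa [Nat.add_assoc] using hstep (n + i)) hle'
            have hwr : Tm.PSubt w r := by simpa [hunr] using hw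
            refine ⟨n + m', w, ⟨?_, ?_⟩, hsub⟩
            · exact ne_of_sz_lt (lt_trans (psubt_sz hwr) hszr)
            · rw [hv]; exact Tm.Subt.compL hwr.2
      exact sub k 1 hk h1

end TmAux

/-- (1) For n ≥ 3, I_n(a,b) is a product u·v of two previous iterates;
(2) every iterate I_n(a,b) (n ≥ 1) has a among its subterms, and for n ≥ 2 also b;
(3) for every infinite sequence u₀, u₁, ... in which each u_{n+1} is either a proper
subterm of u_n or an iterate of a pair (r,s) with u_n = r∘s, some u_n is a subterm
of a proper subterm of u₀. -/

theorem Tm.iter_structure {α : Type*} :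
    (∀ (a b : Tm α) (n : ℕ), 3 ≤ n → ∃ (i j : ℕ), 1 ≤ i ∧ 1 ≤ j ∧ i < n ∧ j < n ∧
      Tm.iter n a b = Tm.mul (Tm.iter i a b) (Tm.iter j a b)) ∧
    (∀ (a b : Tm α) (n : ℕ), 1 ≤ n →
      Tm.Subt a (Tm.iter n a b) ∧ (2 ≤ n → Tm.Subt b (Tm.iter n a b))) ∧
    (∀ u : ℕ → Tm α,
      (∀ n, Tm.PSubt (u (n + 1)) (u n) ∨
        ∃ (r s : Tm α) (k : ℕ), 1 ≤ k ∧ u n = Tm.comp r s ∧ u (n + 1) = Tm.iter k r s) →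
      ∃ (n : ℕ) (w : Tm α), Tm.PSubt w (u 0) ∧ Tm.Subt (u n) w) := by
  refine ⟨?_, ?_, ?_⟩
  · intro a b n hn
    obtain ⟨m, rfl⟩ : ∃ m, n = m + 3 := ⟨n - 3, by omega⟩
    exact ⟨m + 2, m + 1, by omega, by omega, by omega, by omega, rfl⟩
  · intro a b n _
    exact TmAux.subt_iter a b n
  · intro u hu
    exact TmAux.key (TmAux.sz (u 0)) u hu le_rfl
end

section
/- In any algebra satisfying Σ, for all p, q: p·(q∘a) = ((p∘q)·a) ∘ (p·q). -/
theorem sigma_mul_comp_eq_general {P : Type*} (mul comp : P → P → P)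
    (hmix : ∀ a b c, mul (comp a b) c = mul a (mul b c))
    (hdist : ∀ a b c, mul a (comp b c) = comp (mul a b) (mul a c))
    (habs : ∀ a b, comp a b = comp (mul a b) a) :
    ∀ p q a, mul p (comp q a) = comp (mul (comp p q) a) (mul p q) := by
  intro p q a
  calc mul p (comp q a)
      = mul p (comp (mul q a) q) := by rw [habs q a]
    _ = comp (mul p (mul q a)) (mul p q) := hdist p _ q
    _ = comp (mul (comp p q) a) (mul p q) := by rw [hmix]

/-- In any algebra satisfying Σ: p·(q∘a) = ((p∘q)·a) ∘ (p·q). -/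
theorem sigma_mul_comp_eq {P : Type*} (mul comp : P → P → P)
    (hassoc : ∀ a b c, comp a (comp b c) = comp (comp a b) c)
    (hmix : ∀ a b c, mul (comp a b) c = mul a (mul b c))
    (hdist : ∀ a b c, mul a (comp b c) = comp (mul a b) (mul a c))
    (habs : ∀ a b, comp a b = comp (mul a b) a) :
    ∀ p q a, mul p (comp q a) = comp (mul (comp p q) a) (mul p q) :=
  sigma_mul_comp_eq_general mul comp hmix hdist habs
end

section
/- In any algebra satisfying Σ, for all p, a, b: p·a·(p∘b) = (p·(a∘b))·p ∘ (p·(a·b)). -/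
/-- In any algebra satisfying Σ: (p·a)·(p∘b) = ((p·(a∘b))·p) ∘ (p·(a·b)). -/
theorem sigma_mul_mul_comp_eq {P : Type*} (mul comp : P → P → P)
    (hassoc : ∀ a b c, comp a (comp b c) = comp (comp a b) c)
    (hmix : ∀ a b c, mul (comp a b) c = mul a (mul b c))
    (hdist : ∀ a b c, mul a (comp b c) = comp (mul a b) (mul a c))
    (habs : ∀ a b, comp a b = comp (mul a b) a) :
    ∀ p a b, mul (mul p a) (comp p b) = comp (mul (mul p (comp a b)) p) (mul p (mul a b)) := by
  have hself : ∀ p a b, mul p (mul a b) = mul (mul p a) (mul p b) := by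
    intro p a b
    rw [← hmix p a b, habs p a, hmix]
  intro p a b
  rw [habs p b, habs (mul p b) p, hdist, hdist p a b, hmix, hself, hself p a b]
end

section
/- In any algebra satisfying Σ, for all p, a, b: (p·a)∘(p∘b) = p∘(a∘b). -/
theorem sigma_mul_comp_comp_eq_general {P : Type*} (mul comp : P → P → P)
    (hassoc : ∀ a b c, comp a (comp b c) = comp (comp a b) c)
    (hdist : ∀ a b c, mul a (comp b c) = comp (mul a b) (mul a c))
    (habs : ∀ a b, comp a b = comp (mul a b) a) :
    ∀ p a b, comp (mul p a) (comp p b) = comp p (comp a b) := by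
  intro p a b
  calc comp (mul p a) (comp p b)
      = comp (mul p a) (comp (mul p b) p) := by rw [← habs]
    _ = comp (comp (mul p a) (mul p b)) p := hassoc _ _ _
    _ = comp (mul p (comp a b)) p := by rw [hdist]
    _ = comp p (comp a b) := (habs _ _).symm

/-- In any algebra satisfying Σ: (p·a)∘(p∘b) = p∘(a∘b). -/
theorem sigma_mul_comp_comp_eq {P : Type*} (mul comp : P → P → P)
    (hassoc : ∀ a b c, comp a (comp b c) = comp (comp a b) c)
    (hmix : ∀ a b c, mul (comp a b) c = mul a (mul b c))
    (hdist : ∀ a b c, mul a (comp b c) = comp (mul a b) (mul a c))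
    (habs : ∀ a b, comp a b = comp (mul a b) a) :
    ∀ p a b, comp (mul p a) (comp p b) = comp p (comp a b) :=
  sigma_mul_comp_comp_eq_general mul comp hassoc hdist habs
end
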